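/- Let a : (0,∞) → ℂ be smooth with a(r) = 0 for 0 < r < 1/2 and, for every integer k ≥ 0, |a^{(k)}(r)| ≤ C_k r^{−k} for all r > 0, and let β ∈ C_c^∞(ℝ) with 0 ≤ β ≤ 1 and supp β ⊆ [3/4, 8/3]. Then there exists ε₀ > 0 such that for every 0 < ε ≤ ε₀ and every η ∈ C_c^∞(ℝ) with 0 ≤ η ≤ 1 and supp η ⊆ [π−2ε, π+2ε] the following holds: there is a constant C (depending on ε, η, β and finitely many C_k) such that for every ζ ∈ ℝ, every integer j ≥ 1, and all r₁, r₂ > 0: |∫_{π−2ε}^{π} e^{i ζ θ + i 2^j d_G(r₁,r₂;θ)} β(d_G(r₁,r₂;θ)) d_G(r₁,r₂;θ)^{−1/2} a(2^j d_G(r₁,r₂;θ)) η(θ) dθ| ≤ C (2^j r₁ r₂)^{−1/2}. -/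

import Mathlib

open MeasureTheory Real Set
open scoped ENNReal

/-- `d_G(r₁,r₂;θ) = √(r₁² + r₂² - 2 r₁ r₂ cos θ)`. -/
noncomputable def dG (r₁ r₂ θ : ℝ) : ℝ :=
  Real.sqrt (r₁^2 + r₂^2 - 2 * r₁ * r₂ * Real.cos θ)

lemma norm_exp_I_mul_ofReal (t : ℝ) : ‖Complex.exp (Complex.I * (t:ℂ))‖ = 1 := by
  rw [Complex.norm_exp]
  simp

lemma vdc1 (φ f f' : ℝ → ℝ) (c d : ℝ) (hcd : c ≤ d) (μ : ℝ) (hμ : 0 < μ)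
    (hφ : ∀ x ∈ Set.Icc c d, HasDerivAt φ (f x) x)
    (hf : ∀ x ∈ Set.Icc c d, HasDerivAt f (f' x) x)
    (hf'c : ContinuousOn f' (Set.Icc c d))
    (hf'neg : ∀ x ∈ Set.Icc c d, f' x ≤ 0)
    (hfμ : ∀ x ∈ Set.Icc c d, μ ≤ |f x|) :
    ‖∫ x in c..d, Complex.exp (Complex.I * (φ x : ℂ))‖ ≤ 4 / μ := by
  have hfne : ∀ x ∈ Set.Icc c d, f x ≠ 0 := by
    intro x hx
    have := hfμ x hx
    intro h; rw [h] at this; simp at this; linarith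
  have hIfne : ∀ x ∈ Set.Icc c d, (Complex.I * (f x : ℂ)) ≠ 0 := by
    intro x hx
    simp [Complex.I_ne_zero, hfne x hx]
  set e : ℝ → ℂ := fun x => Complex.exp (Complex.I * (φ x : ℂ)) with he_def
  have hecont : ContinuousOn e (Set.Icc c d) := by
    apply Continuous.comp_continuousOn Complex.continuous_exp
    apply ContinuousOn.mul continuousOn_const
    exact Complex.continuous_ofReal.comp_continuousOn
      (fun x hx => (hφ x hx).continuousAt.continuousWithinAt)
  have hfcont : ContinuousOn f (Set.Icc c d) :=
    fun x hx => (hf x hx).continuousAt.continuousWithinAt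
  have he : ∀ x ∈ Set.Icc c d, HasDerivAt e (Complex.I * (f x : ℂ) * e x) x := by
    intro x hx
    have h1 : HasDerivAt (fun y => Complex.I * ((φ y : ℝ) : ℂ)) (Complex.I * (f x : ℂ)) x :=
      ((hφ x hx).ofReal_comp).const_mul Complex.I
    have := h1.cexp
    convert this using 1
    ring
  set G : ℝ → ℂ := fun x => e x * (Complex.I * (f x : ℂ))⁻¹ with hG_def
  have hG : ∀ x ∈ Set.Icc c d,
      HasDerivAt G (e x + Complex.I * e x * ((f' x / (f x)^2 : ℝ) : ℂ)) x := by
    intro x hx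
    have hw2 : HasDerivAt (fun y => Complex.I * ((f y : ℝ) : ℂ)) (Complex.I * (f' x : ℂ)) x :=
      ((hf x hx).ofReal_comp).const_mul Complex.I
    have hw : HasDerivAt (fun y => (Complex.I * ((f y : ℝ) : ℂ))⁻¹)
        (-(((Complex.I * (f x : ℂ))^2)⁻¹) * (Complex.I * (f' x : ℂ))) x :=
      (hasDerivAt_inv (hIfne x hx)).comp x hw2
    have := (he x hx).mul hw
    refine this.congr_deriv ?_
    have hfx : (f x : ℂ) ≠ 0 := Complex.ofReal_ne_zero.mpr (hfne x hx)
    have hI : Complex.I ≠ 0 := Complex.I_ne_zero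
    have hccast : ((f' x / f x^2 : ℝ) : ℂ) = (f' x : ℂ)/(f x:ℂ)^2 := by push_cast; ring
    rw [hccast]
    field_simp
    linear_combination (-(e x) * (f' x : ℂ)) * Complex.I_sq
  have hcontmul : ContinuousOn (fun x => Complex.I * e x * ((f' x / (f x)^2 : ℝ) : ℂ)) (Set.Icc c d) :=
    (continuousOn_const.mul hecont).mul (Complex.continuous_ofReal.comp_continuousOn
      (hf'c.div (hfcont.pow 2) (fun x hx => pow_ne_zero 2 (hfne x hx))))
  have hG'cont : ContinuousOn
      (fun x => e x + Complex.I * e x * ((f' x / (f x)^2 : ℝ) : ℂ)) (Set.Icc c d) :=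
    hecont.add hcontmul
  have hG'int : IntervalIntegrable
      (fun x => e x + Complex.I * e x * ((f' x / (f x)^2 : ℝ) : ℂ)) volume c d := by
    apply ContinuousOn.intervalIntegrable
    rwa [Set.uIcc_of_le hcd]
  have hFTC : ∫ x in c..d, (e x + Complex.I * e x * ((f' x / (f x)^2 : ℝ) : ℂ)) = G d - G c := by
    apply intervalIntegral.integral_eq_sub_of_hasDerivAt
    · intro x hx; exact hG x (by rwa [Set.uIcc_of_le hcd] at hx)
    · exact hG'int
  have heint : IntervalIntegrable e volume c d := by
    apply ContinuousOn.intervalIntegrable; rwa [Set.uIcc_of_le hcd]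
  have hrint : IntervalIntegrable (fun x => Complex.I * e x * ((f' x / (f x)^2 : ℝ) : ℂ)) volume c d := by
    apply ContinuousOn.intervalIntegrable
    rwa [Set.uIcc_of_le hcd]
  have hsplit : ∫ x in c..d, e x = (G d - G c) - ∫ x in c..d, Complex.I * e x * ((f' x / (f x)^2 : ℝ) : ℂ) := by
    rw [← hFTC, ← intervalIntegral.integral_sub hG'int hrint]
    apply intervalIntegral.integral_congr
    intro x _
    ring
  -- bound the remainder integral
  have hinvabs : ∀ x ∈ Set.Icc c d, (|f x|)⁻¹ ≤ μ⁻¹ := fun x hx => inv_anti₀ hμ (hfμ x hx)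
  have hinv : ∀ x ∈ Set.Icc c d, HasDerivAt (fun y => (f y)⁻¹) (-(f' x) / (f x)^2) x := by
    intro x hx
    exact (hf x hx).inv (hfne x hx)
  have hinvint : IntervalIntegrable (fun x => -(f' x) / (f x)^2) volume c d := by
    apply ContinuousOn.intervalIntegrable
    rw [Set.uIcc_of_le hcd]
    exact (hf'c.neg).div (hfcont.pow 2) (fun x hx => pow_ne_zero 2 (hfne x hx))
  have hFTC2 : ∫ x in c..d, (-(f' x) / (f x)^2) = (f d)⁻¹ - (f c)⁻¹ := by
    apply intervalIntegral.integral_eq_sub_of_hasDerivAt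
    · intro x hx; exact hinv x (by rwa [Set.uIcc_of_le hcd] at hx)
    · exact hinvint
  have hcmem : c ∈ Set.Icc c d := ⟨le_refl c, hcd⟩
  have hdmem : d ∈ Set.Icc c d := ⟨hcd, le_refl d⟩
  have hrem : ‖∫ x in c..d, Complex.I * e x * ((f' x / (f x)^2 : ℝ) : ℂ)‖ ≤ 2 / μ := by
    have h1 : ‖∫ x in c..d, Complex.I * e x * ((f' x / (f x)^2 : ℝ) : ℂ)‖
        ≤ ∫ x in c..d, ‖Complex.I * e x * ((f' x / (f x)^2 : ℝ) : ℂ)‖ :=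
      intervalIntegral.norm_integral_le_integral_norm hcd
    have h2 : ∫ x in c..d, ‖Complex.I * e x * ((f' x / (f x)^2 : ℝ) : ℂ)‖
        = ∫ x in c..d, (-(f' x) / (f x)^2) := by
      apply intervalIntegral.integral_congr
      intro x hx
      rw [Set.uIcc_of_le hcd] at hx
      have h3 : ‖e x‖ = 1 := norm_exp_I_mul_ofReal _
      simp only [norm_mul, Complex.norm_I, h3, Complex.norm_real, one_mul,
        Real.norm_eq_abs, abs_div, abs_of_nonpos (hf'neg x hx), abs_of_nonneg (sq_nonneg (f x))]
    rw [h2, hFTC2] at h1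
    have hd1 : (f d)⁻¹ ≤ μ⁻¹ := by
      calc (f d)⁻¹ ≤ |(f d)⁻¹| := le_abs_self _
        _ = (|f d|)⁻¹ := by rw [abs_inv]
        _ ≤ μ⁻¹ := hinvabs d hdmem
    have hc1 : -(f c)⁻¹ ≤ μ⁻¹ := by
      calc -(f c)⁻¹ ≤ |(f c)⁻¹| := neg_le_abs _
        _ = (|f c|)⁻¹ := by rw [abs_inv]
        _ ≤ μ⁻¹ := hinvabs c hcmem
    calc ‖∫ x in c..d, Complex.I * e x * ((f' x / (f x)^2 : ℝ) : ℂ)‖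
        ≤ (f d)⁻¹ - (f c)⁻¹ := h1
      _ ≤ μ⁻¹ + μ⁻¹ := by linarith
      _ = 2 / μ := by rw [div_eq_mul_inv]; ring
  have hGnorm : ∀ x ∈ Set.Icc c d, ‖G x‖ ≤ μ⁻¹ := by
    intro x hx
    have : ‖G x‖ = (|f x|)⁻¹ := by
      have h3 : ‖e x‖ = 1 := norm_exp_I_mul_ofReal _
      rw [hG_def]
      simp only [norm_mul, norm_inv, Complex.norm_I, Complex.norm_real,
        one_mul, Real.norm_eq_abs]
      rw [h3, one_mul]
    rw [this]
    exact hinvabs x hx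
  calc ‖∫ x in c..d, Complex.exp (Complex.I * (φ x : ℂ))‖
      = ‖(G d - G c) - ∫ x in c..d, Complex.I * e x * ((f' x / (f x)^2 : ℝ) : ℂ)‖ := by rw [← hsplit]
    _ ≤ ‖G d - G c‖ + ‖∫ x in c..d, Complex.I * e x * ((f' x / (f x)^2 : ℝ) : ℂ)‖ := norm_sub_le _ _
    _ ≤ (‖G d‖ + ‖G c‖) + 2/μ := add_le_add (norm_sub_le _ _) hrem
    _ ≤ (μ⁻¹ + μ⁻¹) + 2/μ := by
        have := hGnorm d hdmem; have := hGnorm c hcmem; linarith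
    _ = 4 / μ := by rw [div_eq_mul_inv, div_eq_mul_inv]; ring

lemma vdc_core (φ f f' : ℝ → ℝ) (a b : ℝ) (hab : a ≤ b) (A : ℝ) (hA : 0 < A)
    (hφ : ∀ x ∈ Set.Icc a b, HasDerivAt φ (f x) x)
    (hf : ∀ x ∈ Set.Icc a b, HasDerivAt f (f' x) x)
    (hf'c : ContinuousOn f' (Set.Icc a b))
    (hf'A : ∀ x ∈ Set.Icc a b, f' x ≤ -A) :
    ‖∫ x in a..b, Complex.exp (Complex.I * (φ x : ℂ))‖ ≤ 10 / Real.sqrt A := by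
  set μ := Real.sqrt A with hμ_def
  have hμ : 0 < μ := Real.sqrt_pos.mpr hA
  have hμsq : μ * μ = A := Real.mul_self_sqrt hA.le
  have hfcont : ContinuousOn f (Set.Icc a b) :=
    fun x hx => (hf x hx).continuousAt.continuousWithinAt
  have hφcont : ContinuousOn φ (Set.Icc a b) :=
    fun x hx => (hφ x hx).continuousAt.continuousWithinAt
  have hecont : ContinuousOn (fun x => Complex.exp (Complex.I * (φ x : ℂ))) (Set.Icc a b) := by
    apply Continuous.comp_continuousOn Complex.continuous_exp
    exact continuousOn_const.mul (Complex.continuous_ofReal.comp_continuousOn hφcont)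
  have hanti : StrictAntiOn f (Set.Icc a b) := by
    apply strictAntiOn_of_deriv_neg (convex_Icc a b) hfcont
    intro x hx
    have hx' : x ∈ Set.Icc a b := interior_subset hx
    rw [(hf x hx').deriv]
    linarith [hf'A x hx']
  have hantimono : AntitoneOn f (Set.Icc a b) := hanti.antitoneOn
  -- generic sub-bound from vdc1
  have hpiece : ∀ c d : ℝ, a ≤ c → c ≤ d → d ≤ b → (∀ x ∈ Set.Icc c d, μ ≤ |f x|) →
      ‖∫ x in c..d, Complex.exp (Complex.I * (φ x : ℂ))‖ ≤ 4 / μ := by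
    intro c d hac hcd hdb habs
    have hsub : Set.Icc c d ⊆ Set.Icc a b := Set.Icc_subset_Icc hac hdb
    exact vdc1 φ f f' c d hcd μ hμ (fun x hx => hφ x (hsub hx)) (fun x hx => hf x (hsub hx))
      (hf'c.mono hsub) (fun x hx => le_trans (hf'A x (hsub hx)) (by linarith)) habs
  by_cases h1 : μ < f b
  · have habs : ∀ x ∈ Set.Icc a b, μ ≤ |f x| := by
      intro x hx
      have : f b ≤ f x := hantimono hx (Set.right_mem_Icc.mpr hab) hx.2
      calc μ ≤ f x := by linarith
        _ ≤ |f x| := le_abs_self _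
    calc ‖∫ x in a..b, Complex.exp (Complex.I * (φ x : ℂ))‖ ≤ 4 / μ :=
          hpiece a b le_rfl hab le_rfl habs
      _ ≤ 10 / μ := (div_le_div_iff_of_pos_right hμ).mpr (by norm_num)
  by_cases h2 : f a < -μ
  · have habs : ∀ x ∈ Set.Icc a b, μ ≤ |f x| := by
      intro x hx
      have : f x ≤ f a := hantimono (Set.left_mem_Icc.mpr hab) hx hx.1
      have : f x ≤ -μ := by linarith
      calc μ ≤ -(f x) := by linarith
        _ ≤ |f x| := neg_le_abs _
    calc ‖∫ x in a..b, Complex.exp (Complex.I * (φ x : ℂ))‖ ≤ 4 / μ :=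
          hpiece a b le_rfl hab le_rfl habs
      _ ≤ 10 / μ := (div_le_div_iff_of_pos_right hμ).mpr (by norm_num)
  push_neg at h1 h2
  -- construct c
  have hcex : ∃ c ∈ Set.Icc a b, f c ≤ μ ∧ (c = a ∨ f c = μ) := by
    by_cases h3 : f a ≤ μ
    · exact ⟨a, Set.left_mem_Icc.mpr hab, h3, Or.inl rfl⟩
    · push_neg at h3
      have : μ ∈ Set.Icc (f b) (f a) := ⟨h1, h3.le⟩
      obtain ⟨c, hc, hfc⟩ := intermediate_value_Icc' hab hfcont this
      exact ⟨c, hc, hfc.le, Or.inr hfc⟩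
  have hdex : ∃ d ∈ Set.Icc a b, -μ ≤ f d ∧ (d = b ∨ f d = -μ) := by
    by_cases h3 : -μ ≤ f b
    · exact ⟨b, Set.right_mem_Icc.mpr hab, h3, Or.inl rfl⟩
    · push_neg at h3
      have : -μ ∈ Set.Icc (f b) (f a) := ⟨h3.le, h2⟩
      obtain ⟨d, hd, hfd⟩ := intermediate_value_Icc' hab hfcont this
      exact ⟨d, hd, hfd.ge, Or.inr hfd⟩
  obtain ⟨c, hcmem, hfcμ, hcalt⟩ := hcex
  obtain ⟨d, hdmem, hfdμ, hdalt⟩ := hdex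
  have hcd : c ≤ d := by
    rcases hcalt with rfl | hcμ
    · exact hdmem.1
    rcases hdalt with rfl | hdμ
    · exact hcmem.2
    by_contra hlt
    push_neg at hlt
    have := hanti hdmem hcmem hlt
    rw [hcμ, hdμ] at this
    linarith
  -- piece 1 : [a, c]
  have hP1 : ‖∫ x in a..c, Complex.exp (Complex.I * (φ x : ℂ))‖ ≤ 4 / μ := by
    rcases hcalt with rfl | hcμ
    · rw [intervalIntegral.integral_same]
      simp
      positivity
    · apply hpiece a c le_rfl hcmem.1 hcmem.2
      intro x hx
      have hxab : x ∈ Set.Icc a b := ⟨hx.1, le_trans hx.2 hcmem.2⟩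
      have : f c ≤ f x := hantimono hxab hcmem hx.2
      calc μ ≤ f x := by linarith [hcμ ▸ this]
        _ ≤ |f x| := le_abs_self _
  -- piece 3 : [d, b]
  have hP3 : ‖∫ x in d..b, Complex.exp (Complex.I * (φ x : ℂ))‖ ≤ 4 / μ := by
    rcases hdalt with rfl | hdμ
    · rw [intervalIntegral.integral_same]
      simp
      positivity
    · apply hpiece d b hdmem.1 hdmem.2 le_rfl
      intro x hx
      have hxab : x ∈ Set.Icc a b := ⟨le_trans hdmem.1 hx.1, hx.2⟩
      have : f x ≤ f d := hantimono hdmem hxab hx.1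
      calc μ ≤ -(f x) := by linarith [hdμ ▸ this]
        _ ≤ |f x| := neg_le_abs _
  -- piece 2 : [c, d]
  have hP2 : ‖∫ x in c..d, Complex.exp (Complex.I * (φ x : ℂ))‖ ≤ 2 / μ := by
    have hlen : d - c ≤ 2 / μ := by
      have hganti : AntitoneOn (fun x => f x + A * x) (Set.Icc a b) := by
        apply antitoneOn_of_deriv_nonpos (convex_Icc a b)
        · exact hfcont.add (continuous_const.mul continuous_id).continuousOn
        · intro x hx
          have hx' : x ∈ Set.Icc a b := interior_subset hx
          have hid : HasDerivAt (fun y : ℝ => A * y) A x := by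
            simpa using (hasDerivAt_id x).const_mul A
          exact ((hf x hx').add hid).differentiableAt.differentiableWithinAt
        · intro x hx
          have hx' : x ∈ Set.Icc a b := interior_subset hx
          have hid : HasDerivAt (fun y : ℝ => A * y) A x := by
            simpa using (hasDerivAt_id x).const_mul A
          rw [HasDerivAt.deriv (f := fun x => f x + A * x) ((hf x hx').add hid)]
          have := hf'A x hx'
          linarith
      have := hganti hcmem hdmem hcd
      simp only at this
      have hAdc : A * (d - c) ≤ 2 * μ := by nlinarith
      calc d - c ≤ 2 * μ / A := by rw [le_div_iff₀ hA]; nlinarith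
        _ = 2 / μ := by rw [← hμsq]; field_simp
    have hbound : ‖∫ x in c..d, Complex.exp (Complex.I * (φ x : ℂ))‖ ≤ 1 * |d - c| := by
      apply intervalIntegral.norm_integral_le_of_norm_le_const
      intro x _
      rw [norm_exp_I_mul_ofReal]
    rw [abs_of_nonneg (by linarith : (0:ℝ) ≤ d - c), one_mul] at hbound
    linarith
  -- combine
  have hic : IntervalIntegrable (fun x => Complex.exp (Complex.I * (φ x : ℂ))) volume a c := by
    apply ContinuousOn.intervalIntegrable
    rw [Set.uIcc_of_le hcmem.1]
    exact hecont.mono (Set.Icc_subset_Icc le_rfl hcmem.2)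
  have hicd : IntervalIntegrable (fun x => Complex.exp (Complex.I * (φ x : ℂ))) volume c d := by
    apply ContinuousOn.intervalIntegrable
    rw [Set.uIcc_of_le hcd]
    exact hecont.mono (Set.Icc_subset_Icc hcmem.1 hdmem.2)
  have hidb : IntervalIntegrable (fun x => Complex.exp (Complex.I * (φ x : ℂ))) volume d b := by
    apply ContinuousOn.intervalIntegrable
    rw [Set.uIcc_of_le hdmem.2]
    exact hecont.mono (Set.Icc_subset_Icc hdmem.1 le_rfl)
  have hsplit1 := intervalIntegral.integral_add_adjacent_intervals hic hicd
  have hsplit2 := intervalIntegral.integral_add_adjacent_intervals (hic.trans hicd) hidb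
  rw [← hsplit1] at hsplit2
  calc ‖∫ x in a..b, Complex.exp (Complex.I * (φ x : ℂ))‖
      = ‖(∫ x in a..c, Complex.exp (Complex.I * (φ x : ℂ)))
          + (∫ x in c..d, Complex.exp (Complex.I * (φ x : ℂ)))
          + (∫ x in d..b, Complex.exp (Complex.I * (φ x : ℂ)))‖ := by
        rw [← hsplit2]
    _ ≤ ‖(∫ x in a..c, Complex.exp (Complex.I * (φ x : ℂ)))
          + (∫ x in c..d, Complex.exp (Complex.I * (φ x : ℂ)))‖
          + ‖∫ x in d..b, Complex.exp (Complex.I * (φ x : ℂ))‖ := norm_add_le _ _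
    _ ≤ ‖∫ x in a..c, Complex.exp (Complex.I * (φ x : ℂ))‖
          + ‖∫ x in c..d, Complex.exp (Complex.I * (φ x : ℂ))‖
          + ‖∫ x in d..b, Complex.exp (Complex.I * (φ x : ℂ))‖ := by
        have := norm_add_le (∫ x in a..c, Complex.exp (Complex.I * (φ x : ℂ)))
          (∫ x in c..d, Complex.exp (Complex.I * (φ x : ℂ)))
        linarith
    _ ≤ 4/μ + 2/μ + 4/μ := by linarith
    _ = 10 / μ := by field_simp; ring



lemma vdc_amp (φ f f' : ℝ → ℝ) (ψ ψ' : ℝ → ℂ) (a b : ℝ) (hab : a ≤ b) (A : ℝ) (hA : 0 < A)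
    (hφc : Continuous φ)
    (hφ : ∀ x ∈ Set.Icc a b, HasDerivAt φ (f x) x)
    (hf : ∀ x ∈ Set.Icc a b, HasDerivAt f (f' x) x)
    (hf'c : ContinuousOn f' (Set.Icc a b))
    (hf'A : ∀ x ∈ Set.Icc a b, f' x ≤ -A)
    (hψ : ∀ x ∈ Set.Icc a b, HasDerivAt ψ (ψ' x) x)
    (hψ'c : ContinuousOn ψ' (Set.Icc a b)) :
    ‖∫ x in a..b, Complex.exp (Complex.I * (φ x : ℂ)) * ψ x‖
      ≤ 10 / Real.sqrt A * (‖ψ b‖ + ∫ x in a..b, ‖ψ' x‖) := by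
  set e : ℝ → ℂ := fun x => Complex.exp (Complex.I * (φ x : ℂ)) with he_def
  have hec : Continuous e := by
    apply Complex.continuous_exp.comp
    exact continuous_const.mul (Complex.continuous_ofReal.comp hφc)
  set F : ℝ → ℂ := fun u => ∫ x in a..u, e x with hF_def
  have hF : ∀ u : ℝ, HasDerivAt F (e u) u := by
    intro u
    exact intervalIntegral.integral_hasDerivAt_right (hec.intervalIntegrable a u)
      (hec.stronglyMeasurableAtFilter volume (nhds u)) hec.continuousAt
  have hFc : Continuous F := by
    apply continuous_iff_continuousAt.mpr
    intro u
    exact (hF u).continuousAt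
  have hFbound : ∀ u ∈ Set.Icc a b, ‖F u‖ ≤ 10 / Real.sqrt A := by
    intro u hu
    have hsub : Set.Icc a u ⊆ Set.Icc a b := Set.Icc_subset_Icc le_rfl hu.2
    exact vdc_core φ f f' a u hu.1 A hA (fun x hx => hφ x (hsub hx)) (fun x hx => hf x (hsub hx))
      (hf'c.mono hsub) (fun x hx => hf'A x (hsub hx))
  have hψc : ContinuousOn ψ (Set.Icc a b) :=
    fun x hx => (hψ x hx).continuousAt.continuousWithinAt
  have hint1 : IntervalIntegrable (fun x => e x * ψ x) volume a b := by
    apply ContinuousOn.intervalIntegrable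
    rw [Set.uIcc_of_le hab]
    exact hec.continuousOn.mul hψc
  have hint2 : IntervalIntegrable (fun x => F x * ψ' x) volume a b := by
    apply ContinuousOn.intervalIntegrable
    rw [Set.uIcc_of_le hab]
    exact hFc.continuousOn.mul hψ'c
  have hIBP : ∫ x in a..b, (e x * ψ x + F x * ψ' x) = F b * ψ b - F a * ψ a := by
    apply intervalIntegral.integral_eq_sub_of_hasDerivAt
    · intro x hx
      rw [Set.uIcc_of_le hab] at hx
      exact (hF x).mul (hψ x hx)
    · exact (hint1.add hint2)
  have hFa : F a = 0 := intervalIntegral.integral_same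
  have hsplit : ∫ x in a..b, e x * ψ x = F b * ψ b - ∫ x in a..b, F x * ψ' x := by
    rw [intervalIntegral.integral_add hint1 hint2, hFa, zero_mul, sub_zero] at hIBP
    linear_combination hIBP
  have hpos : (0:ℝ) < 10 / Real.sqrt A := by positivity
  have hnormint : IntervalIntegrable (fun x => ‖ψ' x‖) volume a b := by
    apply ContinuousOn.intervalIntegrable
    rw [Set.uIcc_of_le hab]
    exact hψ'c.norm
  have hrem : ‖∫ x in a..b, F x * ψ' x‖ ≤ 10 / Real.sqrt A * ∫ x in a..b, ‖ψ' x‖ := by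
    calc ‖∫ x in a..b, F x * ψ' x‖ ≤ ∫ x in a..b, ‖F x * ψ' x‖ :=
          intervalIntegral.norm_integral_le_integral_norm hab
      _ ≤ ∫ x in a..b, 10 / Real.sqrt A * ‖ψ' x‖ := by
          apply intervalIntegral.integral_mono_on hab
          · apply ContinuousOn.intervalIntegrable
            rw [Set.uIcc_of_le hab]
            exact (hFc.continuousOn.mul hψ'c).norm
          · apply ContinuousOn.intervalIntegrable
            rw [Set.uIcc_of_le hab]
            exact continuousOn_const.mul hψ'c.norm
          · intro x hx
            rw [norm_mul]
            exact mul_le_mul_of_nonneg_right (hFbound x hx) (norm_nonneg _)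
      _ = 10 / Real.sqrt A * ∫ x in a..b, ‖ψ' x‖ := by
          rw [← intervalIntegral.integral_const_mul]
  have hψ'nonneg : 0 ≤ ∫ x in a..b, ‖ψ' x‖ :=
    intervalIntegral.integral_nonneg hab (fun x _ => norm_nonneg _)
  calc ‖∫ x in a..b, e x * ψ x‖ = ‖F b * ψ b - ∫ x in a..b, F x * ψ' x‖ := by rw [hsplit]
    _ ≤ ‖F b * ψ b‖ + ‖∫ x in a..b, F x * ψ' x‖ := norm_sub_le _ _
    _ ≤ 10 / Real.sqrt A * ‖ψ b‖ + 10 / Real.sqrt A * ∫ x in a..b, ‖ψ' x‖ := by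
        apply add_le_add _ hrem
        rw [norm_mul]
        exact mul_le_mul_of_nonneg_right (hFbound b (Set.right_mem_Icc.mpr hab)) (norm_nonneg _)
    _ = 10 / Real.sqrt A * (‖ψ b‖ + ∫ x in a..b, ‖ψ' x‖) := by ring

lemma rpow_bnd1 {s : ℝ} (hs : 3/4 ≤ s) : s ^ (-(1/2):ℝ) ≤ 2 := by
  have hs0 : (0:ℝ) < s := by linarith
  rw [Real.rpow_neg hs0.le, ← Real.sqrt_eq_rpow]
  have h1 : (1/2:ℝ) ≤ Real.sqrt s := by
    have h := Real.sq_sqrt hs0.le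
    have h2 := Real.sqrt_nonneg s
    nlinarith
  calc (Real.sqrt s)⁻¹ ≤ ((1:ℝ)/2)⁻¹ := inv_anti₀ (by norm_num) h1
    _ = 2 := by norm_num

lemma rpow_bnd2 {s : ℝ} (hs : 3/4 ≤ s) : s ^ (-(1/2)-1:ℝ) ≤ 4 := by
  have hs0 : (0:ℝ) < s := by linarith
  rw [show (-(1/2)-1 : ℝ) = -(1/2) + (-1) by ring, Real.rpow_add hs0, Real.rpow_neg_one]
  have h1 : s⁻¹ ≤ 2 := by
    calc s⁻¹ ≤ ((3:ℝ)/4)⁻¹ := inv_anti₀ (by norm_num) hs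
      _ ≤ 2 := by norm_num
  have h2 : (0:ℝ) ≤ s ^ (-(1/2):ℝ) := Real.rpow_nonneg hs0.le _
  nlinarith [rpow_bnd1 hs]

lemma dG_cont (r₁ r₂ : ℝ) : Continuous (dG r₁ r₂) := by
  unfold dG
  exact Real.continuous_sqrt.comp
    (continuous_const.sub (continuous_const.mul Real.continuous_cos))

set_option maxHeartbeats 2000000 in
/-- Uniform Fourier-multiplier bound: with `a`, `β` as in the paper, for small `ε` and any bump
`η` supported in `[π-2ε, π+2ε]`, for every `ζ ∈ ℝ`, `j ≥ 1` and `r₁, r₂ > 0`,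
`|∫_{π-2ε}^{π} e^{iζθ + i2^j d_G(r₁,r₂;θ)} β(d_G) d_G^{-1/2} a(2^j d_G) η(θ) dθ|
  ≤ C (2^j r₁ r₂)^{-1/2}`. -/
theorem statement9 (a : ℝ → ℂ) (Ck : ℕ → ℝ)
    (ha_smooth : ContDiffOn ℝ (⊤ : ℕ∞) a (Set.Ioi 0))
    (ha_vanish : ∀ r : ℝ, 0 < r → r < 1/2 → a r = 0)
    (ha_bound : ∀ k : ℕ, ∀ r : ℝ, 0 < r →
      ‖iteratedDerivWithin k a (Set.Ioi 0) r‖ ≤ Ck k * r ^ (-(k:ℝ)))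
    (β : ℝ → ℝ) (hβ_smooth : ContDiff ℝ (⊤ : ℕ∞) β) (hβ_cpt : HasCompactSupport β)
    (hβ_nonneg : ∀ t, 0 ≤ β t) (hβ_le : ∀ t, β t ≤ 1)
    (hβ_supp : Function.support β ⊆ Set.Icc (3/4 : ℝ) (8/3)) :
    ∃ ε₀ : ℝ, 0 < ε₀ ∧ ∀ ε : ℝ, 0 < ε → ε ≤ ε₀ →
      ∀ η : ℝ → ℝ, ContDiff ℝ (⊤ : ℕ∞) η → HasCompactSupport η →
        (∀ t, 0 ≤ η t) → (∀ t, η t ≤ 1) →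
        Function.support η ⊆ Set.Icc (π - 2*ε) (π + 2*ε) →
      ∃ C : ℝ, 0 < C ∧ ∀ ζ : ℝ, ∀ j : ℕ, 1 ≤ j →
        ∀ r₁ : ℝ, 0 < r₁ → ∀ r₂ : ℝ, 0 < r₂ →
        ‖∫ θ in (π - 2*ε)..π,
            Complex.exp (Complex.I * ((ζ * θ + (2:ℝ)^(j:ℕ) * dG r₁ r₂ θ : ℝ) : ℂ)) *
            ((β (dG r₁ r₂ θ) : ℝ) : ℂ) * ((dG r₁ r₂ θ ^ (-(1/2:ℝ)) : ℝ) : ℂ) *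
            a ((2:ℝ)^(j:ℕ) * dG r₁ r₂ θ) * ((η θ : ℝ) : ℂ)‖ ≤
          C * ((2:ℝ)^(j:ℕ) * r₁ * r₂) ^ (-(1/2:ℝ)) := by
  refine ⟨1/4, by norm_num, ?_⟩
  intro ε hε hε4 η hη_smooth hη_cpt hη_nonneg hη_le hη_supp
  -- constants for a
  have hC0 : ∀ r : ℝ, 0 < r → ‖a r‖ ≤ Ck 0 := by
    intro r hr
    have h := ha_bound 0 r hr
    simpa [iteratedDerivWithin_zero] using h
  have hC0nn : 0 ≤ Ck 0 := le_trans (norm_nonneg _) (hC0 1 one_pos)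
  have hC1 : ∀ r : ℝ, 0 < r → ‖deriv a r‖ ≤ Ck 1 * r⁻¹ := by
    intro r hr
    have h := ha_bound 1 r hr
    rw [iteratedDerivWithin_one,
      derivWithin_of_isOpen isOpen_Ioi hr] at h
    have : ((1:ℕ):ℝ) = 1 := by norm_num
    rwa [this, Real.rpow_neg_one] at h
  have hC1nn : 0 ≤ Ck 1 := by
    have h := hC1 1 one_pos
    simp only [inv_one, mul_one] at h
    linarith [norm_nonneg (deriv a 1)]
  have htop : (1 : WithTop ℕ∞) ≤ ((⊤:ℕ∞) : WithTop ℕ∞) := by exact_mod_cast le_top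
  have hadiff : ∀ r : ℝ, 0 < r → HasDerivAt a (deriv a r) r := by
    intro r hr
    exact ((ha_smooth.contDiffAt (Ioi_mem_nhds hr)).differentiableAt (by simp)).hasDerivAt
  have haderiv_cont : ContinuousOn (deriv a) (Set.Ioi 0) :=
    ha_smooth.continuousOn_deriv_of_isOpen isOpen_Ioi htop
  have hacont : ContinuousOn a (Set.Ioi 0) := ha_smooth.continuousOn
  obtain ⟨B₁, hB₁⟩ := (hβ_smooth.continuous_deriv htop).bounded_above_of_compact_support hβ_cpt.deriv
  have hB₁nn : 0 ≤ B₁ := le_trans (norm_nonneg _) (hB₁ 0)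
  obtain ⟨B₂, hB₂⟩ := (hη_smooth.continuous_deriv htop).bounded_above_of_compact_support hη_cpt.deriv
  have hB₂nn : 0 ≤ B₂ := le_trans (norm_nonneg _) (hB₂ 0)
  have hβz : ∀ s : ℝ, s < 3/4 → β s = 0 := by
    intro s hs
    by_contra h
    have := (hβ_supp (Function.mem_support.mpr h)).1
    linarith
  have hβ'z : ∀ s : ℝ, s < 3/4 → deriv β s = 0 := by
    intro s hs
    by_contra h
    have h1 : s ∈ tsupport β := support_deriv_subset (Function.mem_support.mpr h)
    have h2 : s ∈ Set.Icc (3/4:ℝ) (8/3) := closure_minimal hβ_supp isClosed_Icc h1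
    linarith [h2.1]
  have hβabs : ∀ s : ℝ, |β s| ≤ 1 := fun s => abs_le.mpr ⟨by linarith [hβ_nonneg s], hβ_le s⟩
  have hηabs : ∀ t : ℝ, |η t| ≤ 1 := fun t => abs_le.mpr ⟨by linarith [hη_nonneg t], hη_le t⟩
  set K := (4*B₁+4)*(Ck 0) + 6*(Ck 1) + 2*(Ck 0)*B₂ with hK_def
  have hKnn : 0 ≤ K := by positivity
  set Cm := 10 * Real.sqrt 8 * (2*Ck 0 + K) + 1 with hCm_def
  have hCmpos : 0 < Cm := by
    have h1 : (0:ℝ) ≤ 10 * Real.sqrt 8 * (2*Ck 0 + K) :=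
      mul_nonneg (by positivity) (by linarith)
    linarith
  refine ⟨Cm, hCmpos, ?_⟩
  intro ζ j hj r₁ hr₁ r₂ hr₂
  set L := (2:ℝ)^(j:ℕ) with hL_def
  have hLpos : 0 < L := by positivity
  set aa := π - 2*ε with haa_def
  have hab : aa ≤ π := by
    rw [haa_def]; linarith
  have hrrpos : 0 < r₁ * r₂ := mul_pos hr₁ hr₂
  have hcos : ∀ θ ∈ Set.Icc aa π, Real.cos θ ≤ -(1/2) := by
    intro θ hθ
    have h1 : 0 ≤ π - θ := by linarith [hθ.2]
    have h2 : π - θ ≤ 2*ε := by have := hθ.1; rw [haa_def] at this; linarith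
    have h3 := Real.one_sub_sq_div_two_le_cos (x := π - θ)
    have h4 : Real.cos (π - θ) = - Real.cos θ := Real.cos_pi_sub θ
    nlinarith
  have hq_lb : ∀ θ ∈ Set.Icc aa π, r₁^2 + r₂^2 + r₁*r₂ ≤ r₁^2 + r₂^2 - 2*r₁*r₂*Real.cos θ := by
    intro θ hθ
    have := hcos θ hθ
    nlinarith
  have hqpos : ∀ θ ∈ Set.Icc aa π, 0 < r₁^2 + r₂^2 - 2*r₁*r₂*Real.cos θ := by
    intro θ hθ
    have := hq_lb θ hθ
    nlinarith
  have hdGpos : ∀ θ ∈ Set.Icc aa π, 0 < dG r₁ r₂ θ := by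
    intro θ hθ
    exact Real.sqrt_pos.mpr (hqpos θ hθ)
  have hdGsq : ∀ θ ∈ Set.Icc aa π, (dG r₁ r₂ θ)^2 = r₁^2 + r₂^2 - 2*r₁*r₂*Real.cos θ := by
    intro θ hθ
    exact Real.sq_sqrt (hqpos θ hθ).le
  by_cases hbig : 4 < r₁ + r₂
  · -- integrand vanishes identically
    have hzero : Set.EqOn (fun θ =>
        Complex.exp (Complex.I * ((ζ * θ + L * dG r₁ r₂ θ : ℝ) : ℂ)) *
        ((β (dG r₁ r₂ θ) : ℝ) : ℂ) * ((dG r₁ r₂ θ ^ (-(1/2:ℝ)) : ℝ) : ℂ) *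
        a (L * dG r₁ r₂ θ) * ((η θ : ℝ) : ℂ)) (fun _ => (0:ℂ)) (Set.uIcc aa π) := by
      intro θ hθ
      rw [Set.uIcc_of_le hab] at hθ
      have h1 := hq_lb θ hθ
      have h2 := hdGsq θ hθ
      have h3 := hdGpos θ hθ
      have h83 : 8/3 < dG r₁ r₂ θ := by nlinarith
      have hβ0 : β (dG r₁ r₂ θ) = 0 := by
        by_contra h
        have := (hβ_supp (Function.mem_support.mpr h)).2
        linarith
      simp [hβ0]
    rw [intervalIntegral.integral_congr hzero]
    simp only [intervalIntegral.integral_const, smul_zero, norm_zero]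
    exact mul_nonneg hCmpos.le (Real.rpow_nonneg (by positivity) _)
  push_neg at hbig
  -- Case B : r₁ + r₂ ≤ 4
  have hrr4 : r₁ * r₂ ≤ 4 := by nlinarith [sq_nonneg (r₁ - r₂)]
  have hdGle : ∀ θ ∈ Set.Icc aa π, dG r₁ r₂ θ ≤ 4 := by
    intro θ hθ
    have h2 := hdGsq θ hθ
    have h3 := hdGpos θ hθ
    have hc := Real.neg_one_le_cos θ
    nlinarith
  have h2rr : ∀ θ ∈ Set.Icc aa π, 2*(r₁*r₂) ≤ (dG r₁ r₂ θ)^2 := by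
    intro θ hθ
    have h2 := hdGsq θ hθ
    have := hcos θ hθ
    nlinarith [sq_nonneg (r₁ - r₂), hrrpos]
  set D : ℝ → ℝ := fun θ => r₁*r₂*Real.sin θ / dG r₁ r₂ θ with hD_def
  have hDabs : ∀ θ ∈ Set.Icc aa π, |D θ| ≤ 2 := by
    intro θ hθ
    have hs := hdGpos θ hθ
    have h2 := h2rr θ hθ
    have hsin : |Real.sin θ| ≤ 1 := abs_le.mpr ⟨Real.neg_one_le_sin θ, Real.sin_le_one θ⟩
    have hnum : |r₁*r₂*Real.sin θ| ≤ r₁*r₂ := by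
      rw [abs_mul, abs_of_pos hrrpos]
      nlinarith
    have hD1 : |D θ| * dG r₁ r₂ θ ≤ r₁*r₂ := by
      rw [hD_def]
      simp only
      rw [abs_div, abs_of_pos hs, div_mul_cancel₀ _ (ne_of_gt hs)]
      exact hnum
    nlinarith [abs_nonneg (D θ), sq_nonneg (|D θ| - 2)]
  -- derivative of dG
  have hsder : ∀ θ ∈ Set.Icc aa π, HasDerivAt (dG r₁ r₂) (D θ) θ := by
    intro θ hθ
    have hq' : HasDerivAt (fun x => r₁^2 + r₂^2 - 2*r₁*r₂*Real.cos x) (2*r₁*r₂*Real.sin θ) θ := by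
      have h1 := ((Real.hasDerivAt_cos θ).const_mul (2*r₁*r₂)).const_sub (r₁^2 + r₂^2)
      exact h1.congr_deriv (by ring)
    have h2 := (Real.hasDerivAt_sqrt (ne_of_gt (hqpos θ hθ))).comp θ hq'
    have h3 : HasDerivAt (fun x => Real.sqrt (r₁^2 + r₂^2 - 2*r₁*r₂*Real.cos x))
        (1 / (2 * Real.sqrt (r₁^2 + r₂^2 - 2*r₁*r₂*Real.cos θ)) * (2*r₁*r₂*Real.sin θ)) θ := h2
    have h4 : (1 / (2 * Real.sqrt (r₁^2 + r₂^2 - 2*r₁*r₂*Real.cos θ)) * (2*r₁*r₂*Real.sin θ)) = D θ := by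
      rw [hD_def]
      have hs := hdGpos θ hθ
      unfold dG at hs ⊢
      field_simp
    rw [h4] at h3
    exact h3
  have hscont : Continuous (dG r₁ r₂) := dG_cont r₁ r₂
  have hDcont : ContinuousOn D (Set.Icc aa π) := by
    apply ContinuousOn.div
    · exact (continuous_const.mul Real.continuous_sin).continuousOn
    · exact hscont.continuousOn
    · exact fun θ hθ => ne_of_gt (hdGpos θ hθ)
  -- phase and its derivatives
  set ff : ℝ → ℝ := fun θ => ζ + L * D θ with hff_def
  set ff' : ℝ → ℝ := fun θ => L * ((r₁*r₂*Real.cos θ - (D θ)^2) / dG r₁ r₂ θ) with hff'_def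
  have hφd : ∀ θ ∈ Set.Icc aa π, HasDerivAt (fun x => ζ * x + L * dG r₁ r₂ x) (ff θ) θ := by
    intro θ hθ
    have h1 : HasDerivAt (fun x : ℝ => ζ * x) ζ θ := by
      simpa using (hasDerivAt_id θ).const_mul ζ
    exact h1.add ((hsder θ hθ).const_mul L)
  have hfd : ∀ θ ∈ Set.Icc aa π, HasDerivAt ff (ff' θ) θ := by
    intro θ hθ
    have hs := hdGpos θ hθ
    have hN : HasDerivAt (fun x => r₁*r₂*Real.sin x) (r₁*r₂*Real.cos θ) θ := by
      have := (Real.hasDerivAt_sin θ).const_mul (r₁*r₂)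
      convert this using 1
    have hDd : HasDerivAt D
        ((r₁*r₂*Real.cos θ * dG r₁ r₂ θ - r₁*r₂*Real.sin θ * D θ) / (dG r₁ r₂ θ)^2) θ :=
      hN.div (hsder θ hθ) (ne_of_gt hs)
    have h2 := (hDd.const_mul L).const_add ζ
    refine h2.congr_deriv ?_
    rw [hff'_def, hD_def]
    simp only
    field_simp
  have hff'le : ∀ θ ∈ Set.Icc aa π, ff' θ ≤ -(L*(r₁*r₂)/8) := by
    intro θ hθ
    have hs := hdGpos θ hθ
    have hs4 := hdGle θ hθ
    have hcosθ := hcos θ hθ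
    have hnum : r₁*r₂*Real.cos θ - (D θ)^2 ≤ -(r₁*r₂/2) := by
      nlinarith [sq_nonneg (D θ)]
    have hdiv : (r₁*r₂*Real.cos θ - (D θ)^2) / dG r₁ r₂ θ ≤ -(r₁*r₂/8) := by
      rw [div_le_iff₀ hs]
      nlinarith
    rw [hff'_def]
    simp only
    calc L * ((r₁*r₂*Real.cos θ - (D θ)^2) / dG r₁ r₂ θ) ≤ L * (-(r₁*r₂/8)) :=
          mul_le_mul_of_nonneg_left hdiv hLpos.le
      _ = -(L*(r₁*r₂)/8) := by ring
  have hff'cont : ContinuousOn ff' (Set.Icc aa π) := by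
    apply ContinuousOn.mul continuousOn_const
    apply ContinuousOn.div
    · exact ((continuous_const.mul Real.continuous_cos).continuousOn).sub (hDcont.pow 2)
    · exact hscont.continuousOn
    · exact fun θ hθ => ne_of_gt (hdGpos θ hθ)
  -- the amplitude
  set ψ : ℝ → ℂ := fun θ => ((β (dG r₁ r₂ θ) : ℝ) : ℂ) * ((dG r₁ r₂ θ ^ (-(1/2:ℝ)) : ℝ) : ℂ) *
      a (L * dG r₁ r₂ θ) * ((η θ : ℝ) : ℂ) with hψ_def
  set ψ' : ℝ → ℂ := fun θ =>
      ((((deriv β (dG r₁ r₂ θ) * D θ : ℝ) : ℂ) * ((dG r₁ r₂ θ ^ (-(1/2:ℝ)) : ℝ) : ℂ)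
          + ((β (dG r₁ r₂ θ) : ℝ) : ℂ) * ((-(1/2:ℝ) * dG r₁ r₂ θ ^ (-(1/2:ℝ) - 1) * D θ : ℝ) : ℂ))
          * a (L * dG r₁ r₂ θ)
        + ((β (dG r₁ r₂ θ) : ℝ) : ℂ) * ((dG r₁ r₂ θ ^ (-(1/2:ℝ)) : ℝ) : ℂ)
          * ((L * D θ) • deriv a (L * dG r₁ r₂ θ))) * ((η θ : ℝ) : ℂ)
      + ((β (dG r₁ r₂ θ) : ℝ) : ℂ) * ((dG r₁ r₂ θ ^ (-(1/2:ℝ)) : ℝ) : ℂ) * a (L * dG r₁ r₂ θ)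
          * ((deriv η θ : ℝ) : ℂ) with hψ'_def
  have hLs : ∀ θ ∈ Set.Icc aa π, 0 < L * dG r₁ r₂ θ :=
    fun θ hθ => mul_pos hLpos (hdGpos θ hθ)
  have hψd : ∀ θ ∈ Set.Icc aa π, HasDerivAt ψ (ψ' θ) θ := by
    intro θ hθ
    have hs := hdGpos θ hθ
    have hg1d : HasDerivAt (fun x => ((β (dG r₁ r₂ x) : ℝ) : ℂ))
        ((deriv β (dG r₁ r₂ θ) * D θ : ℝ) : ℂ) θ :=
      (((hβ_smooth.differentiable (by simp) (dG r₁ r₂ θ)).hasDerivAt).comp θ (hsder θ hθ)).ofReal_comp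
    have hg2d : HasDerivAt (fun x => ((dG r₁ r₂ x ^ (-(1/2:ℝ)) : ℝ) : ℂ))
        ((-(1/2:ℝ) * dG r₁ r₂ θ ^ (-(1/2:ℝ) - 1) * D θ : ℝ) : ℂ) θ := by
      have h1 : HasDerivAt (fun x : ℝ => x ^ (-(1/2:ℝ)))
          (-(1/2:ℝ) * dG r₁ r₂ θ ^ (-(1/2:ℝ) - 1)) (dG r₁ r₂ θ) :=
        Real.hasDerivAt_rpow_const (Or.inl (ne_of_gt hs))
      exact ((h1.comp θ (hsder θ hθ))).ofReal_comp
    have hg3d : HasDerivAt (fun x => a (L * dG r₁ r₂ x))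
        ((L * D θ) • deriv a (L * dG r₁ r₂ θ)) θ :=
      (hadiff _ (hLs θ hθ)).scomp θ ((hsder θ hθ).const_mul L)
    have hg4d : HasDerivAt (fun x => ((η x : ℝ) : ℂ)) ((deriv η θ : ℝ) : ℂ) θ :=
      ((hη_smooth.differentiable (by simp) θ).hasDerivAt).ofReal_comp
    have := (((hg1d.mul hg2d).mul hg3d).mul hg4d)
    exact this
  have hψ'cont : ContinuousOn ψ' (Set.Icc aa π) := by
    have hg2c : ContinuousOn (fun θ => dG r₁ r₂ θ ^ (-(1/2:ℝ))) (Set.Icc aa π) := by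
      intro θ hθ
      exact ((Real.continuousAt_rpow_const _ _ (Or.inl (ne_of_gt (hdGpos θ hθ)))).comp
        hscont.continuousAt).continuousWithinAt
    have hg2'c : ContinuousOn (fun θ => dG r₁ r₂ θ ^ (-(1/2:ℝ) - 1)) (Set.Icc aa π) := by
      intro θ hθ
      exact ((Real.continuousAt_rpow_const _ _ (Or.inl (ne_of_gt (hdGpos θ hθ)))).comp
        hscont.continuousAt).continuousWithinAt
    have hmaps : Set.MapsTo (fun θ => L * dG r₁ r₂ θ) (Set.Icc aa π) (Set.Ioi 0) :=
      fun θ hθ => hLs θ hθ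
    have hac : ContinuousOn (fun θ => a (L * dG r₁ r₂ θ)) (Set.Icc aa π) :=
      hacont.comp (continuous_const.mul hscont).continuousOn hmaps
    have ha'c : ContinuousOn (fun θ => deriv a (L * dG r₁ r₂ θ)) (Set.Icc aa π) :=
      haderiv_cont.comp (continuous_const.mul hscont).continuousOn hmaps
    have hβc : ContinuousOn (fun θ => ((β (dG r₁ r₂ θ) : ℝ) : ℂ)) (Set.Icc aa π) :=
      Complex.continuous_ofReal.comp_continuousOn
        ((hβ_smooth.continuous.comp hscont).continuousOn)
    have hβ'c : ContinuousOn (fun θ => ((deriv β (dG r₁ r₂ θ) * D θ : ℝ) : ℂ)) (Set.Icc aa π) :=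
      Complex.continuous_ofReal.comp_continuousOn
        ((((hβ_smooth.continuous_deriv htop).comp hscont).continuousOn).mul hDcont)
    have hηc : Continuous (fun θ => ((η θ : ℝ) : ℂ)) :=
      Complex.continuous_ofReal.comp hη_smooth.continuous
    have hη'c : Continuous (fun θ => ((deriv η θ : ℝ) : ℂ)) :=
      Complex.continuous_ofReal.comp (hη_smooth.continuous_deriv htop)
    rw [hψ'_def]
    apply ContinuousOn.add
    · apply ContinuousOn.mul _ hηc.continuousOn
      apply ContinuousOn.add
      · apply ContinuousOn.mul _ hac
        apply ContinuousOn.add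
        · exact hβ'c.mul (Complex.continuous_ofReal.comp_continuousOn hg2c)
        · exact hβc.mul (Complex.continuous_ofReal.comp_continuousOn
            ((continuousOn_const.mul hg2'c).mul hDcont))
      · exact (hβc.mul (Complex.continuous_ofReal.comp_continuousOn hg2c)).mul
          ((continuousOn_const.mul hDcont).smul ha'c)
    · exact (((hβc.mul (Complex.continuous_ofReal.comp_continuousOn hg2c)).mul hac).mul
        hη'c.continuousOn)
  -- pointwise bound on ψ'
  have hψ'b : ∀ θ ∈ Set.Icc aa π, ‖ψ' θ‖ ≤ K := by
    intro θ hθ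
    by_cases hsm : dG r₁ r₂ θ < 3/4
    · rw [hψ'_def]
      simp only [hβz _ hsm, hβ'z _ hsm, zero_mul, Complex.ofReal_zero, add_zero, mul_zero]
      simp
      exact hKnn
    · push_neg at hsm
      have hs := hdGpos θ hθ
      have hsle := hdGle θ hθ
      have hD2 := hDabs θ hθ
      have hg2b : dG r₁ r₂ θ ^ (-(1/2:ℝ)) ≤ 2 := rpow_bnd1 hsm
      have hg2nn : (0:ℝ) ≤ dG r₁ r₂ θ ^ (-(1/2:ℝ)) := Real.rpow_nonneg hs.le _
      have hg2'b : dG r₁ r₂ θ ^ (-(1/2:ℝ) - 1) ≤ 4 := rpow_bnd2 hsm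
      have hg2'nn : (0:ℝ) ≤ dG r₁ r₂ θ ^ (-(1/2:ℝ) - 1) := Real.rpow_nonneg hs.le _
      have hab3 : ‖a (L * dG r₁ r₂ θ)‖ ≤ Ck 0 := hC0 _ (hLs θ hθ)
      have ha'b : ‖deriv a (L * dG r₁ r₂ θ)‖ ≤ Ck 1 * (L * dG r₁ r₂ θ)⁻¹ := hC1 _ (hLs θ hθ)
      have hβb := hβabs (dG r₁ r₂ θ)
      have hβ'b : |deriv β (dG r₁ r₂ θ)| ≤ B₁ := hB₁ _
      have hηb := hηabs θ
      have hη'b : |deriv η θ| ≤ B₂ := hB₂ _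
      -- assemble
      have hT1 : ‖(((deriv β (dG r₁ r₂ θ) * D θ : ℝ) : ℂ) * ((dG r₁ r₂ θ ^ (-(1/2:ℝ)) : ℝ) : ℂ)
          + ((β (dG r₁ r₂ θ) : ℝ) : ℂ) * ((-(1/2:ℝ) * dG r₁ r₂ θ ^ (-(1/2:ℝ) - 1) * D θ : ℝ) : ℂ))‖
          ≤ 4*B₁ + 4 := by
        calc ‖_ + _‖ ≤ ‖((deriv β (dG r₁ r₂ θ) * D θ : ℝ) : ℂ) * ((dG r₁ r₂ θ ^ (-(1/2:ℝ)) : ℝ) : ℂ)‖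
              + ‖((β (dG r₁ r₂ θ) : ℝ) : ℂ) * ((-(1/2:ℝ) * dG r₁ r₂ θ ^ (-(1/2:ℝ) - 1) * D θ : ℝ) : ℂ)‖ :=
              norm_add_le _ _
          _ ≤ (B₁ * 2) * 2 + 1 * ((1/2) * 4 * 2) := by
              apply add_le_add
              · rw [norm_mul, Complex.norm_real, Complex.norm_real, Real.norm_eq_abs,
                  Real.norm_eq_abs, abs_mul]
                apply mul_le_mul _ _ (abs_nonneg _) (by positivity)
                · exact mul_le_mul hβ'b hD2 (abs_nonneg _) hB₁nn
                · rw [abs_of_nonneg hg2nn]; exact hg2b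
              · rw [norm_mul, Complex.norm_real, Complex.norm_real, Real.norm_eq_abs,
                  Real.norm_eq_abs, abs_mul, abs_mul]
                have h5 : |(-(1/2:ℝ))| = 1/2 := by norm_num
                rw [h5, abs_of_nonneg hg2'nn]
                apply mul_le_mul hβb _ (by positivity) (by norm_num)
                nlinarith
          _ = 4*B₁ + 4 := by ring
      have hT2 : ‖((β (dG r₁ r₂ θ) : ℝ) : ℂ) * ((dG r₁ r₂ θ ^ (-(1/2:ℝ)) : ℝ) : ℂ)‖ ≤ 2 := by
        rw [norm_mul, Complex.norm_real, Complex.norm_real, Real.norm_eq_abs, Real.norm_eq_abs,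
          abs_of_nonneg hg2nn]
        nlinarith [abs_nonneg (β (dG r₁ r₂ θ))]
      have hT3 : ‖(L * D θ) • deriv a (L * dG r₁ r₂ θ)‖ ≤ 3 * Ck 1 := by
        rw [norm_smul, Real.norm_eq_abs, abs_mul, abs_of_pos hLpos]
        have h6 : |D θ| * ‖deriv a (L * dG r₁ r₂ θ)‖ ≤ 2 * (Ck 1 * (L * dG r₁ r₂ θ)⁻¹) :=
          mul_le_mul hD2 ha'b (norm_nonneg _) (by norm_num)
        have h7 : L * |D θ| * ‖deriv a (L * dG r₁ r₂ θ)‖ ≤ L * (2 * (Ck 1 * (L * dG r₁ r₂ θ)⁻¹)) := by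
          rw [mul_assoc]
          exact mul_le_mul_of_nonneg_left h6 hLpos.le
        have h8 : L * (2 * (Ck 1 * (L * dG r₁ r₂ θ)⁻¹)) = 2 * Ck 1 / dG r₁ r₂ θ := by
          field_simp
        have h9 : 2 * Ck 1 / dG r₁ r₂ θ ≤ 3 * Ck 1 := by
          rw [div_le_iff₀ hs]
          nlinarith
        linarith
      have hmain : ‖ψ' θ‖ ≤ ((4*B₁+4) * Ck 0 + 2 * (3 * Ck 1)) * 1 + 2 * Ck 0 * B₂ := by
        rw [hψ'_def]
        simp only
        calc ‖_ + _‖ ≤ ‖((((deriv β (dG r₁ r₂ θ) * D θ : ℝ) : ℂ) * ((dG r₁ r₂ θ ^ (-(1/2:ℝ)) : ℝ) : ℂ)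
              + ((β (dG r₁ r₂ θ) : ℝ) : ℂ) * ((-(1/2:ℝ) * dG r₁ r₂ θ ^ (-(1/2:ℝ) - 1) * D θ : ℝ) : ℂ))
              * a (L * dG r₁ r₂ θ)
            + ((β (dG r₁ r₂ θ) : ℝ) : ℂ) * ((dG r₁ r₂ θ ^ (-(1/2:ℝ)) : ℝ) : ℂ)
              * ((L * D θ) • deriv a (L * dG r₁ r₂ θ))) * ((η θ : ℝ) : ℂ)‖
            + ‖((β (dG r₁ r₂ θ) : ℝ) : ℂ) * ((dG r₁ r₂ θ ^ (-(1/2:ℝ)) : ℝ) : ℂ) * a (L * dG r₁ r₂ θ)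
              * ((deriv η θ : ℝ) : ℂ)‖ := norm_add_le _ _
          _ ≤ ((4*B₁+4) * Ck 0 + 2 * (3 * Ck 1)) * 1 + 2 * Ck 0 * B₂ := by
              apply add_le_add
              · rw [norm_mul]
                apply mul_le_mul _ _ (norm_nonneg _) (by positivity)
                · calc ‖_ + _‖ ≤ ‖(((deriv β (dG r₁ r₂ θ) * D θ : ℝ) : ℂ) * ((dG r₁ r₂ θ ^ (-(1/2:ℝ)) : ℝ) : ℂ)
                      + ((β (dG r₁ r₂ θ) : ℝ) : ℂ) * ((-(1/2:ℝ) * dG r₁ r₂ θ ^ (-(1/2:ℝ) - 1) * D θ : ℝ) : ℂ))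
                      * a (L * dG r₁ r₂ θ)‖
                      + ‖((β (dG r₁ r₂ θ) : ℝ) : ℂ) * ((dG r₁ r₂ θ ^ (-(1/2:ℝ)) : ℝ) : ℂ)
                      * ((L * D θ) • deriv a (L * dG r₁ r₂ θ))‖ := norm_add_le _ _
                    _ ≤ (4*B₁+4) * Ck 0 + 2 * (3 * Ck 1) := by
                        apply add_le_add
                        · rw [norm_mul]
                          exact mul_le_mul hT1 hab3 (norm_nonneg _) (by positivity)
                        · rw [norm_mul]
                          exact mul_le_mul hT2 hT3 (norm_nonneg _) (by norm_num)
                · rw [Complex.norm_real, Real.norm_eq_abs]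
                  exact hηb
              · have h10 : ‖((β (dG r₁ r₂ θ) : ℝ) : ℂ) * ((dG r₁ r₂ θ ^ (-(1/2:ℝ)) : ℝ) : ℂ)
                    * a (L * dG r₁ r₂ θ)‖ ≤ 2 * Ck 0 := by
                  rw [norm_mul]
                  exact mul_le_mul hT2 hab3 (norm_nonneg _) (by norm_num)
                rw [norm_mul]
                apply mul_le_mul h10 _ (norm_nonneg _) (by positivity)
                rw [Complex.norm_real, Real.norm_eq_abs]
                exact hη'b
      rw [hK_def]
      linarith
    -- value at right endpoint
  have hπmem : π ∈ Set.Icc aa π := Set.right_mem_Icc.mpr hab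
  have hψb : ‖ψ π‖ ≤ 2 * Ck 0 := by
    by_cases hsm : dG r₁ r₂ π < 3/4
    · rw [hψ_def]
      simp only [hβz _ hsm, Complex.ofReal_zero, zero_mul]
      simp only [norm_zero]
      positivity
    · push_neg at hsm
      have hs := hdGpos π hπmem
      have hg2b : dG r₁ r₂ π ^ (-(1/2:ℝ)) ≤ 2 := rpow_bnd1 hsm
      have hg2nn : (0:ℝ) ≤ dG r₁ r₂ π ^ (-(1/2:ℝ)) := Real.rpow_nonneg hs.le _
      have hab3 : ‖a (L * dG r₁ r₂ π)‖ ≤ Ck 0 := hC0 _ (hLs π hπmem)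
      have hT2 : ‖((β (dG r₁ r₂ π) : ℝ) : ℂ) * ((dG r₁ r₂ π ^ (-(1/2:ℝ)) : ℝ) : ℂ)‖ ≤ 2 := by
        rw [norm_mul, Complex.norm_real, Complex.norm_real, Real.norm_eq_abs, Real.norm_eq_abs,
          abs_of_nonneg hg2nn]
        nlinarith [abs_nonneg (β (dG r₁ r₂ π)), hβabs (dG r₁ r₂ π)]
      rw [hψ_def]
      simp only
      rw [norm_mul, norm_mul]
      calc ‖((β (dG r₁ r₂ π) : ℝ) : ℂ) * ((dG r₁ r₂ π ^ (-(1/2:ℝ)) : ℝ) : ℂ)‖ *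
            ‖a (L * dG r₁ r₂ π)‖ * ‖((η π : ℝ) : ℂ)‖
          ≤ (2 * Ck 0) * 1 := by
            apply mul_le_mul _ _ (norm_nonneg _) (by positivity)
            · exact mul_le_mul hT2 hab3 (norm_nonneg _) (by norm_num)
            · rw [Complex.norm_real, Real.norm_eq_abs]; exact hηabs π
        _ = 2 * Ck 0 := by ring
  -- integral of the derivative of the amplitude
  have hψ'int : ∫ x in aa..π, ‖ψ' x‖ ≤ K := by
    have h1 : ∫ x in aa..π, ‖ψ' x‖ ≤ ∫ _x in aa..π, K := by
      apply intervalIntegral.integral_mono_on hab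
      · apply ContinuousOn.intervalIntegrable
        rw [Set.uIcc_of_le hab]
        exact hψ'cont.norm
      · exact intervalIntegrable_const
      · exact hψ'b
    have h2 : ∫ _x in aa..π, (K:ℝ) = (π - aa) * K := by
      rw [intervalIntegral.integral_const, smul_eq_mul]
    have h3 : π - aa ≤ 1 := by rw [haa_def]; linarith
    have h4 : 0 ≤ π - aa := by linarith
    rw [h2] at h1
    nlinarith
  -- apply van der Corput
  have hApos : 0 < L * (r₁*r₂) / 8 := by positivity
  have hφcont : Continuous (fun x => ζ * x + L * dG r₁ r₂ x) :=
    (continuous_const.mul continuous_id).add (continuous_const.mul hscont)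
  have hff'A : ∀ x ∈ Set.Icc aa π, ff' x ≤ -(L * (r₁*r₂) / 8) := hff'le
  have hmain := vdc_amp (fun x => ζ * x + L * dG r₁ r₂ x) ff ff' ψ ψ' aa π hab
    (L * (r₁*r₂) / 8) hApos hφcont hφd hfd hff'cont hff'A hψd hψ'cont
  have hcongr : Set.EqOn (fun θ =>
      Complex.exp (Complex.I * ((ζ * θ + L * dG r₁ r₂ θ : ℝ) : ℂ)) *
      ((β (dG r₁ r₂ θ) : ℝ) : ℂ) * ((dG r₁ r₂ θ ^ (-(1/2:ℝ)) : ℝ) : ℂ) *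
      a (L * dG r₁ r₂ θ) * ((η θ : ℝ) : ℂ))
      (fun θ => Complex.exp (Complex.I * ((ζ * θ + L * dG r₁ r₂ θ : ℝ) : ℂ)) * ψ θ)
      (Set.uIcc aa π) := by
    intro θ _
    rw [hψ_def]
    simp only
    ring
  rw [intervalIntegral.integral_congr hcongr]
  -- final numeric assembly
  have hLrr : (0:ℝ) < L * (r₁ * r₂) := by positivity
  have hsLrr : 0 < Real.sqrt (L * (r₁ * r₂)) := Real.sqrt_pos.mpr hLrr
  have h8 : Real.sqrt (L * (r₁*r₂) / 8) = Real.sqrt (L * (r₁*r₂)) / Real.sqrt 8 :=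
    Real.sqrt_div (by positivity) 8
  have h9 : (L * r₁ * r₂ : ℝ) ^ (-(1/2:ℝ)) = (Real.sqrt (L * (r₁*r₂)))⁻¹ := by
    rw [show L * r₁ * r₂ = L * (r₁*r₂) by ring, Real.rpow_neg hLrr.le, ← Real.sqrt_eq_rpow]
  have hs8 : (0:ℝ) < Real.sqrt 8 := Real.sqrt_pos.mpr (by norm_num)
  calc ‖∫ x in aa..π, Complex.exp (Complex.I * ((ζ * x + L * dG r₁ r₂ x : ℝ) : ℂ)) * ψ x‖
      ≤ 10 / Real.sqrt (L * (r₁*r₂) / 8) * (‖ψ π‖ + ∫ x in aa..π, ‖ψ' x‖) := hmain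
    _ ≤ 10 / Real.sqrt (L * (r₁*r₂) / 8) * (2 * Ck 0 + K) := by
        apply mul_le_mul_of_nonneg_left _ (by positivity)
        linarith
    _ = 10 * Real.sqrt 8 * (2 * Ck 0 + K) * (Real.sqrt (L * (r₁*r₂)))⁻¹ := by
        rw [h8]
        field_simp
    _ ≤ Cm * (Real.sqrt (L * (r₁*r₂)))⁻¹ := by
        apply mul_le_mul_of_nonneg_right _ (inv_nonneg.mpr hsLrr.le)
        rw [hCm_def]
        linarith
    _ = Cm * ((L * r₁ * r₂ : ℝ) ^ (-(1/2:ℝ))) := by rw [h9]
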